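/- For any finite undirected multigraph G, the number of totally cyclic fourientations of G equals the sum, over all orientations α of G, of 2^{|Cyc(α)|}, where Cyc(α) is the set of cyclic arcs of α. -/

import Mathlib

/-!
Generalise to a graph with extra arcs `A`, usable by every path, and demands `P`, pairs `(x, y)`
asking that `x` reach `y`, each demand reversed in `A`. Then the fourientations that are totally
cyclic and meet the demands are counted by the orientations meeting the demands, weighted by
`2 ^ |Cyc|`. Induct on the edges, deleting an edge `uv`. On the counting side a 0-way edge
disappears, a 2-way edge becomes the arcs `uv, vu` of `A`, and a 1-way edge `u → v` becomes the
arc `uv` of `A` together with the demand `(v, u)`. On the weighted side an orientation with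
`u → v` becomes the arc `uv` of `A`, and its weight splits according to whether that arc is
cyclic, the cyclic part carrying the demand `(v, u)`. The terms match except for the exchange
identity `w(A) + w(A + uv + vu) = w(A + uv) + w(A + vu)`, which holds orientation by orientation:
if `u` reaches `v` already the arc `uv` changes nothing, and if neither of `u, v` reaches the other
the new arcs create no path from `x` to `y` when `y` reaches `x`, the only kind of pair the weight
looks at.
-/

namespace SubgraphsVsOrientations

/-- The four possible configurations of an edge in a fourientation:
`zero` = 0-way, `forward`/`backward` = the two 1-way configurations (relative to
a reference direction of the edge), `two` = 2-way. -/
inductive Four : Type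
  | zero | forward | backward | two
deriving DecidableEq

instance instFintypeFour : Fintype Four :=
  ⟨{Four.zero, Four.forward, Four.backward, Four.two}, by intro x; cases x <;> simp⟩

variable {V E : Type*}

/-- Whether configuration `c` allows traversal of the edge in direction `b`
(`b = true` means from `src` to `tgt`). -/
def allows : Four → Bool → Prop
  | Four.zero, _ => False
  | Four.forward, b => b = true
  | Four.backward, b => b = false
  | Four.two, _ => True

/-- An edge configuration is solid if it is 0-way or 2-way. -/
def IsSolid (c : Four) : Prop := c = Four.zero ∨ c = Four.two

/-- A configuration is 1-way if it is `forward` or `backward`. -/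
def IsOneWay (c : Four) : Prop := c = Four.forward ∨ c = Four.backward

/-- Reversing a configuration: swaps the two 1-way configurations,
fixes 0-way and 2-way. -/
def flipFour : Four → Four
  | Four.forward => Four.backward
  | Four.backward => Four.forward
  | c => c

/-- The 1-way configuration corresponding to direction `b`. -/
def oneWayFour (b : Bool) : Four := if b then Four.forward else Four.backward

/-- Tail of the arc `(e, b)` (the edge `e` traversed in direction `b`). -/
def arcTail (src tgt : E → V) (a : E × Bool) : V := if a.2 then src a.1 else tgt a.1

/-- Head of the arc `(e, b)`. -/
def arcHead (src tgt : E → V) (a : E × Bool) : V := if a.2 then tgt a.1 else src a.1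

/-- One-step relation of the digraph `G⃗(A,B;φ)`: there is an arc from `x` to `y`, either
a traversable directed edge of the fourientation `φ`, or an extra arc from `A ∪ B`. -/
def arcStep (src tgt : E → V) (A B : Set (V × V)) (φ : E → Four) (x y : V) : Prop :=
  (∃ a : E × Bool, allows (φ a.1) a.2 ∧ arcTail src tgt a = x ∧ arcHead src tgt a = y)
    ∨ (x, y) ∈ A ∪ B

/-- Reachability by a directed path in the digraph `G⃗(A,B;φ)`. -/
def reach (src tgt : E → V) (A B : Set (V × V)) (φ : E → Four) : V → V → Prop :=
  Relation.ReflTransGen (arcStep src tgt A B φ)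

/-- A fourientation `φ` is `(A,B)`-valid: in `G⃗(A,B;φ)`, for every `(u,v) ∈ A` the vertex `v`
cannot reach `u`, and for every `(u,v) ∈ B` the vertex `v` can reach `u`. -/
def IsValid (src tgt : E → V) (A B : Set (V × V)) (φ : E → Four) : Prop :=
  (∀ p ∈ A, ¬ reach src tgt A B φ p.2 p.1) ∧ (∀ p ∈ B, reach src tgt A B φ p.2 p.1)

/-- The set of solid edges of a fourientation. -/
def solidSet (φ : E → Four) : Set E := {e | IsSolid (φ e)}

/-- The fourientation associated to an orientation `σ : E → Bool` (every edge 1-way). -/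
def toFour (σ : E → Bool) : E → Four := fun e => oneWayFour (σ e)

open Classical in
/-- The fourientation associated to a (spanning) subgraph `F ⊆ E`: edges of `F` are 2-way,
the other edges are 0-way. -/
noncomputable def toFourSub (F : Set E) : E → Four :=
  fun e => if e ∈ F then Four.two else Four.zero

/-- The arc `(e,b)` is the arc of a 1-way edge of `φ`. -/
def oneWayArc (φ : E → Four) (a : E × Bool) : Prop := φ a.1 = oneWayFour a.2

/-- `Cyc(φ)`: the set of cyclic 1-way edges (arcs) of the fourientation `φ`, in the digraph
`G⃗(A,B;φ)`: the head of the arc can reach its tail. -/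
def CycSet (src tgt : E → V) (A B : Set (V × V)) (φ : E → Four) : Set (E × Bool) :=
  {a | oneWayArc φ a ∧ reach src tgt A B φ (arcHead src tgt a) (arcTail src tgt a)}

/-- `Acy(φ)`: the set of acyclic 1-way edges (arcs) of the fourientation `φ`. -/
def AcySet (src tgt : E → V) (A B : Set (V × V)) (φ : E → Four) : Set (E × Bool) :=
  {a | oneWayArc φ a ∧ ¬ reach src tgt A B φ (arcHead src tgt a) (arcTail src tgt a)}

/-- `l` is (the arc sequence of) a directed cycle: a nonempty closed chain of arcs
visiting no vertex twice. -/
def IsDirCycle (src tgt : E → V) (l : List (E × Bool)) : Prop :=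
  ∃ h : l ≠ [],
    l.Chain' (fun a b => arcHead src tgt a = arcTail src tgt b) ∧
    arcHead src tgt (l.getLast h) = arcTail src tgt (l.head h) ∧
    (l.map (arcTail src tgt)).Nodup

/-- Reversing the directed cycle `l` in the fourientation `φ`: all 1-way edges on the cycle are
reversed, other edges (in particular 2-way edges of the cycle) are unchanged. -/
def revCyc [DecidableEq E] (φ : E → Four) (l : List (E × Bool)) : E → Four :=
  fun e => if (e, true) ∈ l ∨ (e, false) ∈ l then flipFour (φ e) else φ e

/-- One cycle-reversal move: `ψ` is obtained from `φ` by reversing a directed cycle of `φ`. -/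
def CycleStep (src tgt : E → V) [DecidableEq E] (φ ψ : E → Four) : Prop :=
  ∃ l, IsDirCycle src tgt l ∧ (∀ a ∈ l, allows (φ a.1) a.2) ∧ ψ = revCyc φ l

/-- The edge `e` crosses the cut given by `V1` (in either direction). -/
def edgeCrosses (src tgt : E → V) (V1 : Set V) (e : E) : Prop :=
  (src e ∈ V1 ∧ tgt e ∉ V1) ∨ (tgt e ∈ V1 ∧ src e ∉ V1)

/-- The cut `V1 / V1ᶜ` defines a directed `(A,B)`-cocycle of `G⃗(A,B;φ)`: the set of arcs from
`V1` to `V1ᶜ` is nonempty, no arc of the digraph goes from `V1ᶜ` to `V1`, and no arc of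
`A ∪ B` crosses the cut (in either direction). -/
def IsABCocycleCut (src tgt : E → V) (A B : Set (V × V)) (φ : E → Four) (V1 : Set V) : Prop :=
  (∃ a : E × Bool, allows (φ a.1) a.2 ∧ arcTail src tgt a ∈ V1 ∧ arcHead src tgt a ∉ V1) ∧
  (∀ a : E × Bool, allows (φ a.1) a.2 → ¬ (arcTail src tgt a ∉ V1 ∧ arcHead src tgt a ∈ V1)) ∧
  (∀ p ∈ A ∪ B, ((p : V × V).1 ∈ V1 ↔ p.2 ∈ V1))

open Classical in
/-- Reversing the directed cocycle given by the cut `V1`: all 1-way edges crossing the cut are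
reversed, other edges (in particular 0-way edges crossing the cut) are unchanged. -/
noncomputable def revCut (src tgt : E → V) (φ : E → Four) (V1 : Set V) : E → Four :=
  fun e => if edgeCrosses src tgt V1 e then flipFour (φ e) else φ e

/-- One cocycle-reversal move: `ψ` is obtained from `φ` by reversing a directed
`(A,B)`-cocycle of `φ`. -/
def CocycleStep (src tgt : E → V) (A B : Set (V × V)) (φ ψ : E → Four) : Prop :=
  ∃ V1 : Set V, IsABCocycleCut src tgt A B φ V1 ∧ ψ = revCut src tgt φ V1

/-- One cycle- or cocycle-reversal move. -/
def CCStep (src tgt : E → V) (A B : Set (V × V)) [DecidableEq E] (φ ψ : E → Four) : Prop :=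
  CycleStep src tgt φ ψ ∨ CocycleStep src tgt A B φ ψ

/-- `φ` contains no cycle (of the graph `G`) made entirely of 2-way edges. -/
def NoTwoWayCycle (src tgt : E → V) (φ : E → Four) : Prop :=
  ¬ ∃ l : List (E × Bool), IsDirCycle src tgt l ∧ (l.map Prod.fst).Nodup ∧
      ∀ a ∈ l, φ a.1 = Four.two

/-- `φ` contains no `(A,B)`-cocycle (of the graph `G`) made entirely of 0-way edges:
there is no cut, not crossed by any arc of `A ∪ B`, crossed by at least one edge of `G`,
all of whose crossing edges are 0-way. -/
def NoZeroWayCocycle (src tgt : E → V) (A B : Set (V × V)) (φ : E → Four) : Prop :=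
  ¬ ∃ V1 : Set V, (∃ e, edgeCrosses src tgt V1 e) ∧
      (∀ e, edgeCrosses src tgt V1 e → φ e = Four.zero) ∧
      (∀ p ∈ A ∪ B, ((p : V × V).1 ∈ V1 ↔ p.2 ∈ V1))

/-- The subgraph `F` contains no cycle (it is a forest). -/
def NoCycleIn (src tgt : E → V) (F : Set E) : Prop :=
  ¬ ∃ l : List (E × Bool), IsDirCycle src tgt l ∧ (l.map Prod.fst).Nodup ∧ ∀ a ∈ l, a.1 ∈ F

/-- One undirected adjacency step in the graph `F ∪ A̲ ∪ B̲`. -/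
def usym (src tgt : E → V) (A B : Set (V × V)) (F : Set E) (x y : V) : Prop :=
  (∃ e ∈ F, (src e = x ∧ tgt e = y) ∨ (src e = y ∧ tgt e = x)) ∨
  (∃ p ∈ A ∪ B, ((p : V × V) = (x, y) ∨ p = (y, x)))

/-- Connectivity (by undirected paths) in the graph `F ∪ A̲ ∪ B̲`. -/
def ureach (src tgt : E → V) (A B : Set (V × V)) (F : Set E) : V → V → Prop :=
  Relation.ReflTransGen (usym src tgt A B F)

/-- The subgraph `F` is `(A,B)`-connected: the connected components of `F ∪ A̲ ∪ B̲`
coincide with those of `G ∪ A̲ ∪ B̲`. -/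
def ABConnected (src tgt : E → V) (A B : Set (V × V)) (F : Set E) : Prop :=
  ∀ x y, ureach src tgt A B F x y ↔ ureach src tgt A B Set.univ x y

lemma allows_oneWayFour (b : Bool) : allows (oneWayFour b) b := by
  cases b <;> rfl

lemma oneWayFour_inj {b b' : Bool} : oneWayFour b = oneWayFour b' ↔ b = b' := by
  cases b <;> cases b' <;> simp [oneWayFour]

@[simp] lemma oneWayFour_true : oneWayFour true = .forward := rfl

@[simp] lemma oneWayFour_false : oneWayFour false = .backward := rfl

lemma Four.sum_univ {M : Type*} [AddCommMonoid M] (f : Four → M) :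
    ∑ c, f c = f .zero + f .forward + f .backward + f .two := by
  rw [show (Finset.univ : Finset Four) = {.zero, .forward, .backward, .two} from rfl,
    Finset.sum_insert (by decide), Finset.sum_insert (by decide), Finset.sum_insert (by decide),
    Finset.sum_singleton, add_assoc, add_assoc]

lemma reach_mono {src tgt : E → V} {A A' : Set (V × V)} (h : A ⊆ A') {φ : E → Four} {x y : V}
    (hxy : reach src tgt A ∅ φ x y) : reach src tgt A' ∅ φ x y :=
  Relation.ReflTransGen.mono (fun _ _ ↦ Or.imp_right fun hA ↦ Set.union_subset_union_left ∅ h hA)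
    _ _ hxy

lemma reach_of_mem {src tgt : E → V} {A : Set (V × V)} {φ : E → Four} {x y : V}
    (h : (x, y) ∈ A) : reach src tgt A ∅ φ x y :=
  .single (Or.inr (Or.inl h))

lemma reach_of_allows {src tgt : E → V} {A : Set (V × V)} {φ : E → Four} {a : E × Bool}
    (h : allows (φ a.1) a.2) : reach src tgt A ∅ φ (arcTail src tgt a) (arcHead src tgt a) :=
  .single (Or.inl ⟨a, h, rfl, rfl⟩)

lemma reach_insert_iff {src tgt : E → V} {A : Set (V × V)} {φ : E → Four} {u v x y : V} :
    reach src tgt (insert (u, v) A) ∅ φ x y ↔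
      reach src tgt A ∅ φ x y ∨ (reach src tgt A ∅ φ x u ∧ reach src tgt A ∅ φ v y) := by
  refine ⟨fun h ↦ ?_, ?_⟩
  · induction h with
    | refl => exact Or.inl .refl
    | @tail z w _ hzw ih =>
      by_cases hnew : (z, w) = (u, v)
      · obtain ⟨rfl, rfl⟩ := Prod.mk.inj hnew
        exact Or.inr ⟨ih.elim id (·.1), .refl⟩
      · have hzw : arcStep src tgt A ∅ φ z w := by
          simpa [arcStep, hnew] using hzw
        exact ih.imp (·.tail hzw) fun ⟨hxu, hvz⟩ ↦ ⟨hxu, hvz.tail hzw⟩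
  · rintro (h | ⟨hxu, hvy⟩)
    · exact reach_mono (Set.subset_insert _ _) h
    · exact (reach_mono (Set.subset_insert _ _) hxu).trans
        ((reach_of_mem (Set.mem_insert _ _)).trans (reach_mono (Set.subset_insert _ _) hvy))

lemma reach_insert_iff_of_reach {src tgt : E → V} {A : Set (V × V)} {φ : E → Four} {u v : V}
    (huv : reach src tgt A ∅ φ u v) (x y : V) :
    reach src tgt (insert (u, v) A) ∅ φ x y ↔ reach src tgt A ∅ φ x y := by
  rw [reach_insert_iff]
  exact ⟨fun h ↦ h.elim id fun ⟨hxu, hvy⟩ ↦ (hxu.trans huv).trans hvy, Or.inl⟩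

lemma reach_insert_insert_iff {src tgt : E → V} {A : Set (V × V)} {φ : E → Four} {u v x y : V}
    (huv : ¬ reach src tgt A ∅ φ u v) (hvu : ¬ reach src tgt A ∅ φ v u)
    (hyx : reach src tgt A ∅ φ y x) :
    reach src tgt (insert (u, v) (insert (v, u) A)) ∅ φ x y ↔ reach src tgt A ∅ φ x y := by
  simp only [reach_insert_iff]
  refine ⟨?_, fun h ↦ Or.inl (Or.inl h)⟩
  rintro ((h | ⟨hxv, huy⟩) | ⟨hxu | ⟨hxv, -⟩, hvy | ⟨-, huy⟩⟩)
  · exact h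
  · exact absurd ((huy.trans hyx).trans hxv) huv
  · exact absurd ((hvy.trans hyx).trans hxu) hvu
  · exact hxu.trans huy
  · exact hxv.trans hvy
  · exact absurd ((huy.trans hyx).trans hxv) huv

def TotallyCyclicWith (src tgt : E → V) (A : Set (V × V)) (φ : E → Four) : Prop :=
  ∀ a : E × Bool, oneWayArc φ a → reach src tgt A ∅ φ (arcHead src tgt a) (arcTail src tgt a)

def ReachesAll (src tgt : E → V) (A P : Set (V × V)) (φ : E → Four) : Prop :=
  ∀ p ∈ P, reach src tgt A ∅ φ p.1 p.2

@[simp]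
lemma reachesAll_empty {src tgt : E → V} {A : Set (V × V)} {φ : E → Four} :
    ReachesAll src tgt A ∅ φ := fun _ h ↦ absurd h (Set.notMem_empty _)

lemma reachesAll_insert_iff {src tgt : E → V} {A P : Set (V × V)} {φ : E → Four} {p : V × V} :
    ReachesAll src tgt A (insert p P) φ ↔ reach src tgt A ∅ φ p.1 p.2 ∧ ReachesAll src tgt A P φ :=
  Set.forall_mem_insert ..

lemma reachesAll_union_iff {src tgt : E → V} {A P Q : Set (V × V)} {φ : E → Four} :
    ReachesAll src tgt A (P ∪ Q) φ ↔ ReachesAll src tgt A P φ ∧ ReachesAll src tgt A Q φ :=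
  forall₂_or_left

open Classical in
noncomputable def cycWeight (src tgt : E → V) (A P : Set (V × V)) (σ : E → Bool) : ℕ :=
  if ReachesAll src tgt A P (toFour σ) then 2 ^ (CycSet src tgt A ∅ (toFour σ)).ncard else 0

lemma cycWeight_eq_of_reach_iff {src tgt : E → V} {A A' P : Set (V × V)}
    (hP : ∀ p ∈ P, p.swap ∈ A) {σ : E → Bool}
    (h : ∀ x y, reach src tgt A ∅ (toFour σ) y x →
      (reach src tgt A' ∅ (toFour σ) x y ↔ reach src tgt A ∅ (toFour σ) x y)) :
    cycWeight src tgt A' P σ = cycWeight src tgt A P σ := by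
  have hCyc : CycSet src tgt A' ∅ (toFour σ) = CycSet src tgt A ∅ (toFour σ) := by
    ext a
    refine and_congr_right fun ha ↦ h _ _ (reach_of_allows ?_)
    rw [ha]
    exact allows_oneWayFour a.2
  have hReach : ReachesAll src tgt A' P (toFour σ) ↔ ReachesAll src tgt A P (toFour σ) :=
    forall₂_congr fun p hp ↦ h _ _ (reach_of_mem (hP p hp))
  classical
  unfold cycWeight
  rw [hCyc]
  exact if_congr hReach rfl rfl

lemma cycWeight_add_cycWeight_insert_insert {src tgt : E → V} {A P : Set (V × V)}
    (hP : ∀ p ∈ P, p.swap ∈ A) (u v : V) (σ : E → Bool) :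
    cycWeight src tgt A P σ + cycWeight src tgt (insert (u, v) (insert (v, u) A)) P σ =
      cycWeight src tgt (insert (u, v) A) P σ + cycWeight src tgt (insert (v, u) A) P σ := by
  have hP' : ∀ {A'}, A ⊆ A' → ∀ p ∈ P, p.swap ∈ A' := fun hA p hp ↦ hA (hP p hp)
  have hsub : A ⊆ insert (v, u) A := Set.subset_insert _ _
  by_cases huv : reach src tgt A ∅ (toFour σ) u v
  · rw [cycWeight_eq_of_reach_iff hP fun x y _ ↦ reach_insert_iff_of_reach huv x y,
      cycWeight_eq_of_reach_iff (hP' hsub)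
        fun x y _ ↦ reach_insert_iff_of_reach (reach_mono hsub huv) x y, add_comm]
  by_cases hvu : reach src tgt A ∅ (toFour σ) v u
  · rw [Set.insert_comm, cycWeight_eq_of_reach_iff hP fun x y _ ↦ reach_insert_iff_of_reach hvu x y,
      cycWeight_eq_of_reach_iff (hP' (Set.subset_insert _ _))
        fun x y _ ↦ reach_insert_iff_of_reach (reach_mono (Set.subset_insert _ _) hvu) x y,
      add_comm]
  -- Otherwise all four weights agree: `A ⊆ A + uv, A + vu ⊆ A + uv + vu`, and the outer two
  -- have the same reachability between backward-linked vertices.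
  have hboth := fun x y (hyx : reach src tgt A ∅ (toFour σ) y x) ↦
    reach_insert_insert_iff (x := x) (y := y) huv hvu hyx
  have hone : ∀ {A'}, A ⊆ A' → A' ⊆ insert (u, v) (insert (v, u) A) →
      cycWeight src tgt A' P σ = cycWeight src tgt A P σ := fun h₁ h₂ ↦
    cycWeight_eq_of_reach_iff hP fun x y hyx ↦
      ⟨fun h ↦ (hboth x y hyx).1 (reach_mono h₂ h), reach_mono h₁⟩
  rw [hone (hsub.trans (Set.subset_insert _ _)) subset_rfl,
    hone (Set.subset_insert _ _) (Set.insert_subset_insert (Set.subset_insert _ _)),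
    hone hsub (Set.subset_insert _ _)]

def insertEdgeArcs (src tgt : E → V) (e₀ : E) (c : Four) (A : Set (V × V)) : Set (V × V) :=
  A ∪ {p | ∃ b, allows c b ∧ p = (arcTail src tgt (e₀, b), arcHead src tgt (e₀, b))}

def cycleDemand (src tgt : E → V) (e₀ : E) (c : Four) : Set (V × V) :=
  {p | ∃ b, c = oneWayFour b ∧ p = (arcHead src tgt (e₀, b), arcTail src tgt (e₀, b))}

lemma insertEdgeArcs_zero (src tgt : E → V) (e₀ : E) (A : Set (V × V)) :
    insertEdgeArcs src tgt e₀ .zero A = A := by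
  simp [insertEdgeArcs, allows]

lemma insertEdgeArcs_forward (src tgt : E → V) (e₀ : E) (A : Set (V × V)) :
    insertEdgeArcs src tgt e₀ .forward A = insert (src e₀, tgt e₀) A := by
  ext p
  simp [insertEdgeArcs, allows, arcTail, arcHead, or_comm]

lemma insertEdgeArcs_backward (src tgt : E → V) (e₀ : E) (A : Set (V × V)) :
    insertEdgeArcs src tgt e₀ .backward A = insert (tgt e₀, src e₀) A := by
  ext p
  simp [insertEdgeArcs, allows, arcTail, arcHead, or_comm]

lemma insertEdgeArcs_two (src tgt : E → V) (e₀ : E) (A : Set (V × V)) :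
    insertEdgeArcs src tgt e₀ .two A = insert (src e₀, tgt e₀) (insert (tgt e₀, src e₀) A) := by
  ext p
  simp only [insertEdgeArcs, allows, Set.mem_union, Set.mem_insert_iff, Set.mem_ofPred_eq,
    true_and, Bool.exists_bool, arcTail, arcHead]
  tauto

lemma cycleDemand_zero (src tgt : E → V) (e₀ : E) : cycleDemand src tgt e₀ .zero = ∅ := by
  ext p
  simp [cycleDemand, oneWayFour]

lemma cycleDemand_two (src tgt : E → V) (e₀ : E) : cycleDemand src tgt e₀ .two = ∅ := by
  ext p
  simp [cycleDemand, oneWayFour]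

lemma cycleDemand_oneWayFour (src tgt : E → V) (e₀ : E) (b : Bool) :
    cycleDemand src tgt e₀ (oneWayFour b) =
      {(arcHead src tgt (e₀, b), arcTail src tgt (e₀, b))} := by
  ext p
  simp [cycleDemand, oneWayFour_inj]

lemma swap_mem_insertEdgeArcs {src tgt : E → V} {e₀ : E} {c : Four} {A P : Set (V × V)}
    (hP : ∀ p ∈ P, p.swap ∈ A) : ∀ p ∈ cycleDemand src tgt e₀ c ∪ P,
      p.swap ∈ insertEdgeArcs src tgt e₀ c A := by
  rintro _ (⟨b, rfl, rfl⟩ | hp)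
  · exact Or.inr ⟨b, allows_oneWayFour b, rfl⟩
  · exact Or.inl (hP _ hp)

section EdgeDeletion

variable [DecidableEq E]

def extendAt {α : Type*} (e₀ : E) (c : α) (f : {e // e ≠ e₀} → α) : E → α :=
  (Equiv.funSplitAt e₀ α).symm (c, f)

@[simp]
lemma extendAt_self {α : Type*} (e₀ : E) (c : α) (f : {e // e ≠ e₀} → α) :
    extendAt e₀ c f e₀ = c := by
  simp [extendAt]

@[simp]
lemma extendAt_of_ne {α : Type*} {e₀ e : E} (c : α) (f : {e // e ≠ e₀} → α) (h : e ≠ e₀) :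
    extendAt e₀ c f e = f ⟨e, h⟩ := by
  simp [extendAt, h]

lemma sum_extendAt [Fintype E] {α M : Type*} [Fintype α] [AddCommMonoid M] (e₀ : E)
    (F : (E → α) → M) : ∑ f, F f = ∑ c, ∑ f, F (extendAt e₀ c f) := by
  rw [← Fintype.sum_prod_type', ← (Equiv.funSplitAt e₀ α).symm.sum_comp]
  rfl

open Finset in
lemma card_filter_eq_sum_extendAt [Fintype E] {α : Type*} [Fintype α] (e₀ : E)
    (p : (E → α) → Prop) [DecidablePred p] :
    #{f | p f} = ∑ c, #{f : {e // e ≠ e₀} → α | p (extendAt e₀ c f)} := by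
  simp only [card_filter]
  exact sum_extendAt e₀ _

lemma toFour_extendAt (e₀ : E) (b : Bool) (σ : {e // e ≠ e₀} → Bool) :
    toFour (extendAt e₀ b σ) = extendAt e₀ (oneWayFour b) (toFour σ) := by
  funext e
  by_cases h : e = e₀
  · subst h; simp [toFour]
  · simp [toFour, h]

lemma forall_prod_iff_forall_ne {β : Type*} (e₀ : E) {p : E × β → Prop} :
    (∀ a, p a) ↔ (∀ b, p (e₀, b)) ∧ ∀ a : {e // e ≠ e₀} × β, p (a.1, a.2) := by
  refine ⟨fun h ↦ ⟨fun b ↦ h _, fun a ↦ h _⟩, fun ⟨h₀, h⟩ ⟨e, b⟩ ↦ ?_⟩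
  by_cases he : e = e₀
  · exact he ▸ h₀ b
  · exact h (⟨e, he⟩, b)

lemma arcStep_extendAt (src tgt : E → V) (A : Set (V × V)) (e₀ : E) (c : Four)
    (φ : {e // e ≠ e₀} → Four) :
    arcStep src tgt A ∅ (extendAt e₀ c φ) =
      arcStep (Subtype.restrict _ src) (Subtype.restrict _ tgt)
        (insertEdgeArcs src tgt e₀ c A) ∅ φ := by
  ext x y
  simp only [arcStep, insertEdgeArcs, Set.union_empty, Set.mem_union, Set.mem_ofPred_eq]
  constructor
  · rintro (⟨⟨e, b⟩, hab, rfl, rfl⟩ | hA)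
    · by_cases he : e = e₀
      · subst he
        exact Or.inr (Or.inr ⟨b, by simpa using hab, rfl⟩)
      · exact Or.inl ⟨(⟨e, he⟩, b), by simpa [he] using hab, rfl, rfl⟩
    · exact Or.inr (Or.inl hA)
  · rintro (⟨⟨⟨e, he⟩, b⟩, hab, rfl, rfl⟩ | hA | ⟨b, hab, hxy⟩)
    · exact Or.inl ⟨(e, b), by simpa [he] using hab, rfl, rfl⟩
    · exact Or.inr hA
    · obtain ⟨rfl, rfl⟩ := Prod.mk.inj hxy
      exact Or.inl ⟨(e₀, b), by simpa using hab, rfl, rfl⟩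

lemma reach_extendAt (src tgt : E → V) (A : Set (V × V)) (e₀ : E) (c : Four)
    (φ : {e // e ≠ e₀} → Four) :
    reach src tgt A ∅ (extendAt e₀ c φ) =
      reach (Subtype.restrict _ src) (Subtype.restrict _ tgt)
        (insertEdgeArcs src tgt e₀ c A) ∅ φ := by
  rw [reach, arcStep_extendAt, reach]

lemma reachesAll_extendAt_iff (src tgt : E → V) (A P : Set (V × V)) (e₀ : E) (c : Four)
    (φ : {e // e ≠ e₀} → Four) :
    ReachesAll src tgt A P (extendAt e₀ c φ) ↔
      ReachesAll (Subtype.restrict _ src) (Subtype.restrict _ tgt)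
        (insertEdgeArcs src tgt e₀ c A) P φ := by
  rw [ReachesAll, reach_extendAt, ReachesAll]

lemma totallyCyclicWith_extendAt_iff (src tgt : E → V) (A : Set (V × V)) (e₀ : E) (c : Four)
    (φ : {e // e ≠ e₀} → Four) :
    TotallyCyclicWith src tgt A (extendAt e₀ c φ) ↔
      TotallyCyclicWith (Subtype.restrict _ src) (Subtype.restrict _ tgt)
          (insertEdgeArcs src tgt e₀ c A) φ ∧
        ReachesAll (Subtype.restrict _ src) (Subtype.restrict _ tgt)
          (insertEdgeArcs src tgt e₀ c A) (cycleDemand src tgt e₀ c) φ := by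
  rw [TotallyCyclicWith, forall_prod_iff_forall_ne e₀, and_comm, reach_extendAt]
  refine and_congr (forall_congr' fun a ↦ by rw [oneWayArc, extendAt_of_ne _ _ a.1.2]; rfl) ?_
  simp only [oneWayArc, extendAt_self, ReachesAll, cycleDemand, Set.mem_ofPred_eq,
    forall_exists_index, and_imp]
  exact ⟨fun h _ b hc hp ↦ hp ▸ h b hc, fun h b hc ↦ h _ b hc rfl⟩

lemma cycSet_extendAt (src tgt : E → V) (A : Set (V × V)) (e₀ : E) (b : Bool)
    (φ : {e // e ≠ e₀} → Four) :
    CycSet src tgt A ∅ (extendAt e₀ (oneWayFour b) φ) =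
      Prod.map Subtype.val id '' CycSet (Subtype.restrict _ src) (Subtype.restrict _ tgt)
          (insertEdgeArcs src tgt e₀ (oneWayFour b) A) ∅ φ ∪
        {a | a = (e₀, b) ∧ reach (Subtype.restrict _ src) (Subtype.restrict _ tgt)
          (insertEdgeArcs src tgt e₀ (oneWayFour b) A) ∅ φ
            (arcHead src tgt (e₀, b)) (arcTail src tgt (e₀, b))} := by
  ext ⟨e, β⟩
  by_cases he : e = e₀
  · subst he
    simp only [CycSet, oneWayArc, reach_extendAt, extendAt_self, oneWayFour_inj, Set.mem_union,
      Set.mem_image, Set.mem_ofPred_eq, Prod.map, Prod.mk.injEq]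
    constructor
    · rintro ⟨rfl, h⟩
      exact Or.inr ⟨⟨trivial, rfl⟩, h⟩
    · rintro (⟨⟨⟨e', he'⟩, _⟩, _, he, _⟩ | ⟨⟨-, rfl⟩, h⟩)
      · exact absurd he he'
      · exact ⟨rfl, h⟩
  · simp only [CycSet, oneWayArc, reach_extendAt, extendAt_of_ne _ _ he, Set.mem_union,
      Set.mem_image, Set.mem_ofPred_eq, Prod.map, Prod.mk.injEq, he, false_and, or_false]
    exact ⟨fun h ↦ ⟨(⟨e, he⟩, β), h, rfl, rfl⟩, fun ⟨_, h, he', hβ⟩ ↦ by subst he' hβ; exact h⟩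

open Classical in
lemma ncard_cycSet_extendAt [Finite E] (src tgt : E → V) (A : Set (V × V)) (e₀ : E) (b : Bool)
    (φ : {e // e ≠ e₀} → Four) :
    (CycSet src tgt A ∅ (extendAt e₀ (oneWayFour b) φ)).ncard =
      (CycSet (Subtype.restrict _ src) (Subtype.restrict _ tgt)
          (insertEdgeArcs src tgt e₀ (oneWayFour b) A) ∅ φ).ncard +
        if reach (Subtype.restrict _ src) (Subtype.restrict _ tgt)
          (insertEdgeArcs src tgt e₀ (oneWayFour b) A) ∅ φ
            (arcHead src tgt (e₀, b)) (arcTail src tgt (e₀, b)) then 1 else 0 := by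
  rw [cycSet_extendAt, Set.ncard_union_eq ?_ (Set.toFinite _) (Set.toFinite _),
    Set.ncard_image_of_injective _ (Subtype.val_injective.prodMap Function.injective_id)]
  · split_ifs with h <;> simp [h]
  · rw [Set.disjoint_left]
    rintro _ ⟨a, -, rfl⟩ ⟨h, -⟩
    exact a.1.2 (congrArg Prod.fst h)

lemma cycWeight_extendAt [Finite E] (src tgt : E → V) (A P : Set (V × V)) (e₀ : E) (b : Bool)
    (σ : {e // e ≠ e₀} → Bool) :
    cycWeight src tgt A P (extendAt e₀ b σ) =
      cycWeight (Subtype.restrict _ src) (Subtype.restrict _ tgt)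
          (insertEdgeArcs src tgt e₀ (oneWayFour b) A) P σ +
        cycWeight (Subtype.restrict _ src) (Subtype.restrict _ tgt)
          (insertEdgeArcs src tgt e₀ (oneWayFour b) A)
          (cycleDemand src tgt e₀ (oneWayFour b) ∪ P) σ := by
  classical
  unfold cycWeight
  rw [toFour_extendAt, reachesAll_extendAt_iff, ncard_cycSet_extendAt, cycleDemand_oneWayFour,
    Set.singleton_union, reachesAll_insert_iff]
  split_ifs <;> simp_all [pow_succ, mul_two]

open Classical Finset in
theorem card_totallyCyclicWith_eq_sum_cycWeight [Fintype E] (src tgt : E → V)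
    (A P : Set (V × V)) (hP : ∀ p ∈ P, p.swap ∈ A) :
    #{φ : E → Four | TotallyCyclicWith src tgt A φ ∧ ReachesAll src tgt A P φ} =
      ∑ σ, cycWeight src tgt A P σ := by
  induction hn : Fintype.card E generalizing E A P with
  | zero =>
    have : IsEmpty E := Fintype.card_eq_zero_iff.mp hn
    rw [card_filter, Fintype.sum_unique, Fintype.sum_unique, cycWeight]
    simp only [TotallyCyclicWith, IsEmpty.forall_iff, true_and, Set.eq_empty_of_isEmpty,
      Set.ncard_empty, pow_zero]
    congr 2
    exact Subsingleton.elim _ _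
  | succ n ih =>
    obtain ⟨e₀⟩ : Nonempty E := Fintype.card_pos_iff.mp (hn ▸ n.succ_pos)
    have hn' : Fintype.card {e // e ≠ e₀} = n := by simp [hn]
    have hcount : ∀ c, #{φ | TotallyCyclicWith src tgt A (extendAt e₀ c φ) ∧
        ReachesAll src tgt A P (extendAt e₀ c φ)} =
        ∑ σ, cycWeight (Subtype.restrict _ src) (Subtype.restrict _ tgt)
          (insertEdgeArcs src tgt e₀ c A) (cycleDemand src tgt e₀ c ∪ P) σ := fun c ↦ by
      rw [← ih _ _ _ _ (swap_mem_insertEdgeArcs hP) hn']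
      simp only [totallyCyclicWith_extendAt_iff, reachesAll_extendAt_iff, reachesAll_union_iff,
        and_assoc]
    have hexchange := sum_congr rfl fun σ (_ : σ ∈ univ) ↦
      cycWeight_add_cycWeight_insert_insert (src := Subtype.restrict (· ≠ e₀) src)
        (tgt := Subtype.restrict (· ≠ e₀) tgt) hP (src e₀) (tgt e₀) σ
    rw [sum_add_distrib, sum_add_distrib] at hexchange
    rw [card_filter_eq_sum_extendAt e₀, sum_extendAt e₀]
    simp only [hcount, cycWeight_extendAt, sum_add_distrib, Four.sum_univ, Fintype.sum_bool,
      oneWayFour_true, oneWayFour_false, cycleDemand_zero, cycleDemand_two, Set.empty_union,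
      insertEdgeArcs_zero, insertEdgeArcs_two, insertEdgeArcs_forward, insertEdgeArcs_backward]
    omega

end EdgeDeletion

theorem statement4_general {V E : Type*} [Fintype E] [DecidableEq E] (src tgt : E → V) :
    Nat.card {φ : E → Four //
        ∀ a : E × Bool, oneWayArc φ a →
          reach src tgt ∅ ∅ φ (arcHead src tgt a) (arcTail src tgt a)} =
    ∑ σ : E → Bool, 2 ^ (CycSet src tgt ∅ ∅ (toFour σ)).ncard := by
  classical
  have h := card_totallyCyclicWith_eq_sum_cycWeight src tgt ∅ ∅ (by simp)
  simp only [reachesAll_empty, and_true, cycWeight, if_true] at h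
  rw [Nat.card_eq_fintype_card, Fintype.card_subtype]
  convert h using 3
  rfl

/-- The number of totally cyclic fourientations of a finite graph `G`
(fourientations all of whose 1-way edges are cyclic) equals `∑_α 2^{|Cyc(α)|}`, the sum being
over all orientations `α` of `G`. -/
theorem statement4 {V E : Type*} [Fintype V] [Fintype E] [DecidableEq E] (src tgt : E → V) :
    Nat.card {φ : E → Four //
        ∀ a : E × Bool, oneWayArc φ a →
          reach src tgt ∅ ∅ φ (arcHead src tgt a) (arcTail src tgt a)} =
    ∑ σ : E → Bool, 2 ^ (CycSet src tgt ∅ ∅ (toFour σ)).ncard :=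
  statement4_general src tgt
end SubgraphsVsOrientations
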